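/- Let p be a natural number, let t_0,…,t_p ∈ (−1,1) be distinct nodes and w_0^G,…,w_p^G real weights such that Σ_{j=0}^p w_j^G q(t_j) = ∫_{-1}^1 q(t) dt for every polynomial q of degree at most 2p+1 (the Gauss–Legendre rule). Set θ_j = arccos(t_j) for j = 0,…,p and φ_k = πk/(p+1) for k = 0,…,2p+1. Then for all 0 ≤ n, n' ≤ p and all integers m, m' with |m| ≤ n and |m'| ≤ n', the discrete inner product satisfies (π/(p+1)) Σ_{j=0}^{p} Σ_{k=0}^{2p+1} w_j^G Y_n^m(θ_j,φ_k) conj(Y_{n'}^{m'}(θ_j,φ_k)) = δ_{nn'} δ_{mm'}. -/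

import Mathlib

open MeasureTheory Real Filter Topology Finset
open scoped RealInnerProductSpace

/-- Legendre polynomial `P_n(x) = (2^n n!)⁻¹ dⁿ/dxⁿ (x²-1)ⁿ`. -/
noncomputable def legendreP (n : ℕ) (x : ℝ) : ℝ :=
  ((2 : ℝ) ^ n * n.factorial)⁻¹ * iteratedDeriv n (fun t : ℝ => (t ^ 2 - 1) ^ n) x

/-- Associated Legendre function `P_n^m` for natural order `m ≥ 0`. -/
noncomputable def assocLegendre (n m : ℕ) (x : ℝ) : ℝ :=
  (-1 : ℝ) ^ m * Real.sqrt (1 - x ^ 2) ^ m * iteratedDeriv m (legendreP n) x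

/-- Associated Legendre function of integer order, with
`P_n^{-m} = (-1)^m (n-m)!/(n+m)! P_n^m` for `m ≥ 0`. -/
noncomputable def assocLegendreZ (n : ℕ) (m : ℤ) (x : ℝ) : ℝ :=
  if 0 ≤ m then assocLegendre n m.toNat x
  else (-1 : ℝ) ^ (-m).toNat * ((((n : ℤ) + m).toNat.factorial : ℝ) /
      (((n : ℤ) - m).toNat.factorial : ℝ)) * assocLegendre n (-m).toNat x

/-- Spherical harmonic `Y_n^m(θ,φ) = √((2n+1)/(4π)·(n-m)!/(n+m)!) P_n^m(cos θ) e^{imφ}`. -/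
noncomputable def sphHarm (n : ℕ) (m : ℤ) (θ φ : ℝ) : ℂ :=
  (↑(Real.sqrt ((2 * n + 1) / (4 * Real.pi) *
      ((((n : ℤ) - m).toNat.factorial : ℝ) / (((n : ℤ) + m).toNat.factorial : ℝ)))
    * assocLegendreZ n m (Real.cos θ)) : ℂ) * Complex.exp (Complex.I * m * φ)

/-!
Write `Y_n^m(θ, φ) = Λ_n^m(cos θ) e^{imφ}` with `Λ_n^m` real; the double sum then factors into a
`θ`-sum and a `φ`-sum. The `φ`-sum runs over the powers of a `(2p+2)`-th root of unity, so it
vanishes unless `m = m'`, because `|m - m'| ≤ 2p`. When `m = m'`, the odd powers of `√(1 - x²)`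
pair up, so `Λ_n^m Λ_{n'}^m` is a polynomial of degree `≤ n + n' ≤ 2p` and the Gauss rule
integrates it exactly. The continuous orthogonality `∫_{-1}^1 Λ_n^m Λ_{n'}^m = δ_{nn'} / (2π)`
follows from Rodrigues' formula by `n + |m|` integrations by parts; all boundary terms vanish
because `(x² - 1)^n` and `(1 - x²)^{|m|}` vanish to orders `n` and `|m|` at `±1`.
-/

open Polynomial

theorem Polynomial.iteratedDeriv_eval {𝕜 : Type*} [NontriviallyNormedField 𝕜] (p : 𝕜[X])
    (k : ℕ) : iteratedDeriv k (fun x => p.eval x) = fun x => (derivative^[k] p).eval x := by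
  induction k with
  | zero => simp
  | succ k ih =>
    ext x
    rw [iteratedDeriv_succ, ih, Function.iterate_succ_apply', Polynomial.deriv]

theorem Polynomial.eval_iterate_derivative_eq_zero_of_pow_dvd {R : Type*} [CommRing R]
    {p q : R[X]} {a : R} {N j : ℕ} (hq : q.eval a = 0) (hdvd : q ^ N ∣ p) (hj : j < N) :
    (derivative^[j] p).eval a = 0 :=
  eval_eq_zero_of_dvd_of_eval_eq_zero
    ((dvd_pow_self q (Nat.sub_ne_zero_of_lt hj)).trans
      (pow_sub_dvd_iterate_derivative_of_pow_dvd j hdvd)) hq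

theorem Polynomial.iterate_derivative_eq_C_of_natDegree_le {R : Type*} [Semiring R] {p : R[X]}
    {k : ℕ} (h : p.natDegree ≤ k) : derivative^[k] p = C (k.factorial * p.coeff k) := by
  rw [eq_C_of_natDegree_le_zero ((natDegree_iterate_derivative p k).trans (by omega)),
    coeff_iterate_derivative, zero_add, Nat.descFactorial_self, nsmul_eq_mul]

theorem Polynomial.monic_X_sq_sub_one {R : Type*} [Ring R] : (X ^ 2 - 1 : R[X]).Monic := by
  simpa using monic_X_pow_sub_C (1 : R) two_ne_zero

theorem Polynomial.natDegree_X_sq_sub_one_pow {R : Type*} [Ring R] [Nontrivial R] (n : ℕ) :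
    ((X ^ 2 - 1 : R[X]) ^ n).natDegree = 2 * n := by
  rw [monic_X_sq_sub_one.natDegree_pow, ← C_1, natDegree_X_pow_sub_C, mul_comm]

theorem Polynomial.coeff_X_sq_sub_one_pow_two_mul {R : Type*} [Ring R] [Nontrivial R] (n : ℕ) :
    ((X ^ 2 - 1 : R[X]) ^ n).coeff (2 * n) = 1 := by
  simpa [natDegree_X_sq_sub_one_pow] using (monic_X_sq_sub_one (R := R)).pow n |>.coeff_natDegree

theorem intervalIntegral.integral_derivative_mul_eval (u v : ℝ[X]) (a b : ℝ) :
    ∫ x in a..b, (derivative u).eval x * v.eval x =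
      u.eval b * v.eval b - u.eval a * v.eval a -
        ∫ x in a..b, u.eval x * (derivative v).eval x := by
  have h := integral_mul_deriv_eq_deriv_mul (fun x _ => u.hasDerivAt x)
    (fun x _ => v.hasDerivAt x) ((derivative u).continuous.intervalIntegrable a b)
    ((derivative v).continuous.intervalIntegrable a b)
  linarith

theorem intervalIntegral.integral_iterate_derivative_mul_eval (K : ℕ) (u v : ℝ[X]) {a b : ℝ}
    (hbd : ∀ x ∈ ({a, b} : Set ℝ), ∀ i j, i + j + 1 = K →
      (derivative^[i] u).eval x * (derivative^[j] v).eval x = 0) :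
    ∫ x in a..b, (derivative^[K] u).eval x * v.eval x =
      (-1) ^ K * ∫ x in a..b, u.eval x * (derivative^[K] v).eval x := by
  induction K generalizing u with
  | zero => simp
  | succ K ih =>
    have hu : ∀ x ∈ ({a, b} : Set ℝ), ∀ i j, i + j + 1 = K →
        (derivative^[i] (derivative u)).eval x * (derivative^[j] v).eval x = 0 :=
      fun x hx i j hij => by
        simpa only [← Function.iterate_succ_apply] using hbd x hx (i + 1) j (by omega)
    rw [Function.iterate_succ_apply, ih _ hu, integral_derivative_mul_eval,
      ← Function.iterate_succ_apply' derivative K v]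
    have ha := hbd a (by simp) 0 K (by omega)
    have hb := hbd b (by simp) 0 K (by omega)
    simp only [Function.iterate_zero_apply] at ha hb
    rw [ha, hb]
    ring

theorem integral_sq_sub_one_pow_succ (n : ℕ) :
    (2 * n + 3 : ℝ) * ∫ x in (-1 : ℝ)..1, (x ^ 2 - 1) ^ (n + 1) =
      -(2 * n + 2 : ℝ) * ∫ x in (-1 : ℝ)..1, (x ^ 2 - 1) ^ n := by
  have hderiv : ∀ x : ℝ, HasDerivAt (fun x => x * (x ^ 2 - 1) ^ (n + 1))
      ((2 * n + 3) * (x ^ 2 - 1) ^ (n + 1) + (2 * n + 2) * (x ^ 2 - 1) ^ n) x := by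
    intro x
    refine ((hasDerivAt_id' x).mul
      (((hasDerivAt_pow 2 x).sub_const 1).pow (n + 1))).congr_deriv ?_
    simp only [Pi.pow_apply, Nat.add_sub_cancel, Nat.cast_ofNat, pow_succ]
    push_cast
    ring
  have hftc := intervalIntegral.integral_eq_sub_of_hasDerivAt (a := -1) (b := 1)
    (fun x _ => hderiv x)
    (by apply Continuous.intervalIntegrable; fun_prop)
  rw [intervalIntegral.integral_add (by apply Continuous.intervalIntegrable; fun_prop)
    (by apply Continuous.intervalIntegrable; fun_prop), intervalIntegral.integral_const_mul,
    intervalIntegral.integral_const_mul] at hftc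
  norm_num at hftc
  linarith

theorem integral_sq_sub_one_pow (n : ℕ) :
    ∫ x in (-1 : ℝ)..1, (x ^ 2 - 1) ^ n =
      (-1) ^ n * 2 ^ (2 * n + 1) * (n.factorial : ℝ) ^ 2 / (2 * n + 1).factorial := by
  induction n with
  | zero => norm_num
  | succ n ih =>
    have hrec := integral_sq_sub_one_pow_succ n
    rw [ih] at hrec
    field_simp at hrec
    have hfac : ((n + 1).factorial : ℝ) = (n + 1) * n.factorial := by
      push_cast [Nat.factorial_succ]; ring
    have hfac2 : ((2 * (n + 1) + 1).factorial : ℝ) =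
        (2 * n + 3) * (2 * n + 2) * (2 * n + 1).factorial := by
      rw [show 2 * (n + 1) + 1 = 2 * n + 1 + 1 + 1 by ring, Nat.factorial_succ, Nat.factorial_succ]
      push_cast; ring
    rw [hfac, hfac2, eq_div_iff (by positivity)]
    linear_combination (2 * (n : ℝ) + 2) * hrec

noncomputable def legendrePoly (n : ℕ) : ℝ[X] :=
  C ((2 ^ n * n.factorial : ℝ)⁻¹) * derivative^[n] ((X ^ 2 - 1) ^ n)

theorem legendreP_eq_eval (n : ℕ) : legendreP n = fun x => (legendrePoly n).eval x := by
  ext x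
  have h := congrFun (iteratedDeriv_eval ((X ^ 2 - 1 : ℝ[X]) ^ n) n) x
  simp only [eval_pow, eval_sub, eval_X, eval_one] at h
  rw [legendreP, h, legendrePoly, eval_C_mul]

theorem iterate_derivative_legendrePoly (n μ : ℕ) :
    derivative^[μ] (legendrePoly n) =
      C ((2 ^ n * n.factorial : ℝ)⁻¹) * derivative^[n + μ] ((X ^ 2 - 1) ^ n) := by
  rw [legendrePoly, iterate_derivative_C_mul, ← Function.iterate_add_apply, add_comm μ]

theorem natDegree_iterate_derivative_legendrePoly_le (n μ : ℕ) :
    (derivative^[μ] (legendrePoly n)).natDegree ≤ n - μ := by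
  rw [iterate_derivative_legendrePoly]
  refine (natDegree_C_mul_le _ _).trans ((natDegree_iterate_derivative _ _).trans ?_)
  rw [natDegree_X_sq_sub_one_pow]
  omega

theorem coeff_iterate_derivative_legendrePoly {n μ : ℕ} (hμ : μ ≤ n) :
    (derivative^[μ] (legendrePoly n)).coeff (n - μ) =
      (2 ^ n * n.factorial : ℝ)⁻¹ * (2 * n).descFactorial (n + μ) := by
  rw [iterate_derivative_legendrePoly, coeff_C_mul, coeff_iterate_derivative,
    show n - μ + (n + μ) = 2 * n by omega, coeff_X_sq_sub_one_pow_two_mul, nsmul_one]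

noncomputable def assocLegendreProdPoly (n n' μ : ℕ) : ℝ[X] :=
  (1 - X ^ 2) ^ μ * derivative^[μ] (legendrePoly n) * derivative^[μ] (legendrePoly n')

theorem assocLegendreProdPoly_comm (n n' μ : ℕ) :
    assocLegendreProdPoly n n' μ = assocLegendreProdPoly n' n μ := by
  rw [assocLegendreProdPoly, assocLegendreProdPoly, mul_right_comm]

theorem assocLegendre_mul_assocLegendre (n n' μ : ℕ) {x : ℝ} (hx : x ∈ Set.Icc (-1) 1) :
    assocLegendre n μ x * assocLegendre n' μ x = (assocLegendreProdPoly n n' μ).eval x := by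
  have hsqrt : √(1 - x ^ 2) ^ μ * √(1 - x ^ 2) ^ μ = (1 - x ^ 2) ^ μ := by
    rw [← mul_pow, Real.mul_self_sqrt (by nlinarith [hx.1, hx.2])]
  have hsign : (-1 : ℝ) ^ μ * (-1) ^ μ = 1 := by rw [← mul_pow]; norm_num
  simp only [assocLegendre, assocLegendreProdPoly, legendreP_eq_eval, iteratedDeriv_eval,
    eval_mul, eval_pow, eval_sub, eval_one, eval_X]
  linear_combination (derivative^[μ] (legendrePoly n)).eval x *
      (derivative^[μ] (legendrePoly n')).eval x *
        ((-1) ^ μ * (-1) ^ μ * hsqrt + (1 - x ^ 2) ^ μ * hsign)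

theorem natDegree_one_sub_X_sq_pow_le (μ : ℕ) : ((1 - X ^ 2 : ℝ[X]) ^ μ).natDegree ≤ 2 * μ :=
  (natDegree_pow_le_of_le μ ((natDegree_sub_le _ _).trans (by simp))).trans_eq (mul_comm μ 2)

theorem natDegree_one_sub_X_sq_pow_mul_iterate_derivative_legendrePoly_le {n μ : ℕ}
    (hμ : μ ≤ n) :
    ((1 - X ^ 2 : ℝ[X]) ^ μ * derivative^[μ] (legendrePoly n)).natDegree ≤ n + μ := by
  have := natDegree_one_sub_X_sq_pow_le μ
  have := natDegree_iterate_derivative_legendrePoly_le n μ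
  have := natDegree_mul_le (p := (1 - X ^ 2 : ℝ[X]) ^ μ) (q := derivative^[μ] (legendrePoly n))
  omega

theorem natDegree_assocLegendreProdPoly_le {n n' μ : ℕ} (hn : μ ≤ n) (hn' : μ ≤ n') :
    (assocLegendreProdPoly n n' μ).natDegree ≤ n + n' := by
  have := natDegree_one_sub_X_sq_pow_mul_iterate_derivative_legendrePoly_le hn
  have := natDegree_iterate_derivative_legendrePoly_le n' μ
  have := natDegree_mul_le (p := (1 - X ^ 2 : ℝ[X]) ^ μ * derivative^[μ] (legendrePoly n))
    (q := derivative^[μ] (legendrePoly n'))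
  rw [assocLegendreProdPoly]
  omega

theorem coeff_one_sub_X_sq_pow_two_mul (μ : ℕ) :
    ((1 - X ^ 2 : ℝ[X]) ^ μ).coeff (2 * μ) = (-1) ^ μ := by
  rw [show (1 - X ^ 2 : ℝ[X]) ^ μ = C ((-1) ^ μ) * (X ^ 2 - 1) ^ μ by
    rw [C_pow, C_neg, C_1, ← mul_pow]; ring, coeff_C_mul, coeff_X_sq_sub_one_pow_two_mul, mul_one]

theorem integral_assocLegendreProdPoly_eq (n n' μ : ℕ) :
    ∫ x in (-1 : ℝ)..1, (assocLegendreProdPoly n n' μ).eval x =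
      (-1) ^ (n + μ) * (2 ^ n * n.factorial : ℝ)⁻¹ * ∫ x in (-1 : ℝ)..1, (x ^ 2 - 1) ^ n *
        (derivative^[n + μ] ((1 - X ^ 2) ^ μ * derivative^[μ] (legendrePoly n'))).eval x := by
  set v : ℝ[X] := (1 - X ^ 2) ^ μ * derivative^[μ] (legendrePoly n')
  have hbd : ∀ x ∈ ({-1, 1} : Set ℝ), ∀ i j, i + j + 1 = n + μ →
      (derivative^[i] ((X ^ 2 - 1) ^ n)).eval x * (derivative^[j] v).eval x = 0 := by
    intro x hx i j hij
    have hx2 : x ^ 2 = 1 := by rcases hx with rfl | rfl <;> norm_num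
    rcases lt_or_ge i n with hi | hi
    · rw [eval_iterate_derivative_eq_zero_of_pow_dvd (by simp [hx2]) dvd_rfl hi, zero_mul]
    · rw [eval_iterate_derivative_eq_zero_of_pow_dvd (by simp [hx2]) (dvd_mul_right _ _)
        (by omega : j < μ), mul_zero]
  have hQ : ∀ x, (assocLegendreProdPoly n n' μ).eval x = (2 ^ n * n.factorial : ℝ)⁻¹ *
      ((derivative^[n + μ] ((X ^ 2 - 1) ^ n)).eval x * v.eval x) := by
    intro x
    simp only [assocLegendreProdPoly, iterate_derivative_legendrePoly n μ, v, eval_mul, eval_C]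
    ring
  simp only [hQ, intervalIntegral.integral_const_mul,
    intervalIntegral.integral_iterate_derivative_mul_eval _ _ _ hbd]
  simp only [eval_pow, eval_sub, eval_X, eval_one]
  ring

theorem integral_assocLegendreProdPoly_of_lt {n n' μ : ℕ} (hn' : μ ≤ n') (h : n' < n) :
    ∫ x in (-1 : ℝ)..1, (assocLegendreProdPoly n n' μ).eval x = 0 := by
  have hdeg := (natDegree_one_sub_X_sq_pow_mul_iterate_derivative_legendrePoly_le hn').trans_lt
    (Nat.add_lt_add_right h μ)
  simp [integral_assocLegendreProdPoly_eq, iterate_derivative_eq_zero hdeg]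

theorem integral_assocLegendreProdPoly_self {n μ : ℕ} (hμ : μ ≤ n) :
    ∫ x in (-1 : ℝ)..1, (assocLegendreProdPoly n n μ).eval x =
      2 / (2 * n + 1) * (n + μ).factorial / (n - μ).factorial := by
  have hcoeff : ((1 - X ^ 2 : ℝ[X]) ^ μ * derivative^[μ] (legendrePoly n)).coeff (n + μ) =
      (-1) ^ μ * ((2 ^ n * n.factorial : ℝ)⁻¹ * (2 * n).descFactorial (n + μ)) := by
    conv_lhs => rw [show n + μ = 2 * μ + (n - μ) by omega]
    rw [coeff_mul_add_eq_of_natDegree_le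
      (natDegree_one_sub_X_sq_pow_le μ) (natDegree_iterate_derivative_legendrePoly_le n μ),
      coeff_one_sub_X_sq_pow_two_mul, coeff_iterate_derivative_legendrePoly hμ]
  have hdesc : ((n - μ).factorial : ℝ) * (2 * n).descFactorial (n + μ) = (2 * n).factorial := by
    exact_mod_cast (show 2 * n - (n + μ) = n - μ by omega) ▸
      Nat.factorial_mul_descFactorial (show n + μ ≤ 2 * n by omega)
  have hfac : ((2 * n + 1).factorial : ℝ) = (2 * n + 1) * (2 * n).factorial := by
    push_cast [Nat.factorial_succ]; ring
  have hsign : (-1 : ℝ) ^ (n + μ) * (-1) ^ n * (-1) ^ μ = 1 := by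
    rw [← pow_add, ← pow_add, show n + μ + n + μ = 2 * (n + μ) by ring, pow_mul]; norm_num
  rw [integral_assocLegendreProdPoly_eq, iterate_derivative_eq_C_of_natDegree_le
    (natDegree_one_sub_X_sq_pow_mul_iterate_derivative_legendrePoly_le hμ), hcoeff]
  simp only [eval_C, intervalIntegral.integral_mul_const, integral_sq_sub_one_pow, hfac]
  field_simp
  linear_combination (2 ^ (2 * n + 1) * ((2 * n).descFactorial (n + μ) : ℝ) *
    (n - μ).factorial) * hsign + 2 ^ (2 * n + 1) * hdesc

theorem integral_assocLegendreProdPoly {n n' μ : ℕ} (hn : μ ≤ n) (hn' : μ ≤ n') :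
    ∫ x in (-1 : ℝ)..1, (assocLegendreProdPoly n n' μ).eval x =
      if n = n' then (2 / (2 * n + 1) * (n + μ).factorial / (n - μ).factorial : ℝ) else 0 := by
  rcases lt_trichotomy n n' with h | rfl | h
  · rw [assocLegendreProdPoly_comm, integral_assocLegendreProdPoly_of_lt hn h, if_neg h.ne]
  · rw [if_pos rfl, integral_assocLegendreProdPoly_self hn]
  · rw [integral_assocLegendreProdPoly_of_lt hn' h, if_neg h.ne']

noncomputable def normAssocLegendre (n : ℕ) (m : ℤ) (x : ℝ) : ℝ :=
  √((2 * n + 1) / (4 * π) *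
      ((((n : ℤ) - m).toNat.factorial : ℝ) / (((n : ℤ) + m).toNat.factorial : ℝ))) *
    assocLegendreZ n m x

noncomputable def assocLegendreNormConst (n μ : ℕ) : ℝ :=
  √((2 * n + 1) / (4 * π) * ((n - μ).factorial / (n + μ).factorial))

theorem assocLegendreNormConst_mul_self (n μ : ℕ) :
    assocLegendreNormConst n μ * assocLegendreNormConst n μ =
      (2 * n + 1) / (4 * π) * ((n - μ).factorial / (n + μ).factorial) :=
  Real.mul_self_sqrt (by positivity)

theorem normAssocLegendre_natCast {n μ : ℕ} (hμ : μ ≤ n) (x : ℝ) :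
    normAssocLegendre n μ x = assocLegendreNormConst n μ * assocLegendre n μ x := by
  rw [normAssocLegendre, assocLegendreZ, if_pos (by positivity), assocLegendreNormConst,
    show ((n : ℤ) - μ).toNat = n - μ by omega, show ((n : ℤ) + μ).toNat = n + μ by omega,
    Int.toNat_natCast]

theorem normAssocLegendre_neg_natCast {n μ : ℕ} (hμ : μ ≤ n) (x : ℝ) :
    normAssocLegendre n (-μ) x = (-1) ^ μ * normAssocLegendre n μ x := by
  rcases Nat.eq_zero_or_pos μ with rfl | hpos
  · simp
  have hA : (0 : ℝ) < (n + μ).factorial := by positivity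
  have hB : (0 : ℝ) < (n - μ).factorial := by positivity
  -- `(n-μ)!/(n+μ)!` in `P_n^{-μ}` is absorbed into the square root, swapping its factorials
  have hsqrt : √((2 * n + 1) / (4 * π) * ((n + μ).factorial / (n - μ).factorial)) *
      ((n - μ).factorial / (n + μ).factorial) =
      √((2 * n + 1) / (4 * π) * ((n - μ).factorial / (n + μ).factorial)) := by
    have hsq : (2 * n + 1) / (4 * π) * ((n + μ).factorial / (n - μ).factorial) *
        ((n - μ).factorial / (n + μ).factorial : ℝ) ^ 2 =
        (2 * n + 1) / (4 * π) * ((n - μ).factorial / (n + μ).factorial) := by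
      field_simp
    rw [← hsq, Real.sqrt_mul' _ (sq_nonneg _), Real.sqrt_sq (by positivity)]
  rw [normAssocLegendre_natCast hμ, normAssocLegendre, assocLegendreZ, if_neg (by omega),
    assocLegendreNormConst, ← hsqrt, show ((n : ℤ) - -μ).toNat = n + μ by omega,
    show ((n : ℤ) + -μ).toNat = n - μ by omega, show (-(-μ : ℤ)).toNat = μ by omega]
  ring

theorem normAssocLegendre_mul_eqOn {n n' : ℕ} {m : ℤ} (hn : m.natAbs ≤ n)
    (hn' : m.natAbs ≤ n') :
    Set.EqOn (fun x => normAssocLegendre n m x * normAssocLegendre n' m x)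
      (fun x => (C (assocLegendreNormConst n m.natAbs * assocLegendreNormConst n' m.natAbs) *
        assocLegendreProdPoly n n' m.natAbs).eval x) (Set.Icc (-1) 1) := by
  intro x hx
  have hsign : ∀ μ : ℕ, (-1 : ℝ) ^ μ * (-1) ^ μ = 1 := fun μ => by rw [← mul_pow]; norm_num
  obtain ⟨μ, rfl | rfl⟩ := Int.eq_nat_or_neg m
  all_goals
    simp only [Int.natAbs_neg, Int.natAbs_natCast] at hn hn' ⊢
    simp only [normAssocLegendre_neg_natCast, normAssocLegendre_natCast, hn, hn', eval_mul,
      eval_C, ← assocLegendre_mul_assocLegendre _ _ _ hx]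
  · ring
  · linear_combination assocLegendreNormConst n μ * assocLegendre n μ x *
      assocLegendreNormConst n' μ * assocLegendre n' μ x * hsign μ

theorem integral_normAssocLegendre_mul {n n' : ℕ} {m : ℤ} (hn : m.natAbs ≤ n)
    (hn' : m.natAbs ≤ n') :
    ∫ x in (-1 : ℝ)..1, normAssocLegendre n m x * normAssocLegendre n' m x =
      if n = n' then (2 * π)⁻¹ else 0 := by
  rw [intervalIntegral.integral_congr (by
      rw [Set.uIcc_of_le (by norm_num)]; exact normAssocLegendre_mul_eqOn hn hn')]
  simp only [eval_mul, eval_C, intervalIntegral.integral_const_mul,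
    integral_assocLegendreProdPoly hn hn']
  split_ifs with h
  · subst h
    rw [assocLegendreNormConst_mul_self]
    field_simp
    ring
  · rw [mul_zero]

theorem sum_mul_eq_integral_of_eqOn_eval {ι : Type*} [Fintype ι] {t w : ι → ℝ} {a b : ℝ}
    {D : ℕ} (hq : ∀ q : ℝ[X], q.natDegree ≤ D → ∑ j, w j * q.eval (t j) = ∫ x in a..b, q.eval x)
    (hab : a ≤ b) (ht : ∀ j, t j ∈ Set.Icc a b) {f : ℝ → ℝ} {Q : ℝ[X]} (hQ : Q.natDegree ≤ D)
    (hf : Set.EqOn f (fun x => Q.eval x) (Set.Icc a b)) :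
    ∑ j, w j * f (t j) = ∫ x in a..b, f x := by
  rw [intervalIntegral.integral_congr (by rwa [Set.uIcc_of_le hab]), ← hq Q hQ]
  exact sum_congr rfl fun j _ => by rw [hf (ht j)]

theorem sum_range_exp_two_pi_I_mul_div {N : ℕ} (hN : N ≠ 0) {d : ℤ} (hd : d.natAbs < N) :
    ∑ k ∈ range N, Complex.exp (2 * π * Complex.I * d * k / N) =
      if d = 0 then (N : ℂ) else 0 := by
  split_ifs with h
  · simp [h]
  set ζ := Complex.exp (2 * π * Complex.I / N)
  have hζ : IsPrimitiveRoot ζ N := Complex.isPrimitiveRoot_exp N hN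
  have hterm : ∀ k : ℕ, Complex.exp (2 * π * Complex.I * d * k / N) = (ζ ^ d) ^ k := by
    intro k
    rw [← Complex.exp_int_mul, ← Complex.exp_nat_mul]
    ring_nf
  have hne : ζ ^ d ≠ 1 := fun h1 =>
    h (Int.eq_zero_of_dvd_of_natAbs_lt_natAbs ((hζ.zpow_eq_one_iff_dvd d).mp h1) (by simpa))
  have hpow : (ζ ^ d) ^ N = 1 := by rw [← zpow_natCast, ← zpow_mul, mul_comm, zpow_mul,
    zpow_natCast, hζ.pow_eq_one, one_zpow]
  simp only [hterm, geom_sum_eq hne, hpow, sub_self, zero_div]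

theorem sum_range_exp_I_mul_pi_div (p : ℕ) {d : ℤ} (hd : d.natAbs < 2 * p + 2) :
    ∑ k ∈ range (2 * p + 2), Complex.exp (Complex.I * d * ((π * k / (p + 1) : ℝ) : ℂ)) =
      if d = 0 then ((2 * p + 2 : ℕ) : ℂ) else 0 := by
  rw [← sum_range_exp_two_pi_I_mul_div (by omega) hd]
  refine sum_congr rfl fun k _ => congrArg Complex.exp ?_
  push_cast
  field_simp

theorem sum_mul_normAssocLegendre_mul {ι : Type*} [Fintype ι] {t w : ι → ℝ} {D : ℕ}
    (hq : ∀ q : ℝ[X], q.natDegree ≤ D →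
      ∑ j, w j * q.eval (t j) = ∫ x in (-1 : ℝ)..1, q.eval x)
    (ht : ∀ j, t j ∈ Set.Icc (-1) 1) {n n' : ℕ} {m : ℤ} (hD : n + n' ≤ D)
    (hn : m.natAbs ≤ n) (hn' : m.natAbs ≤ n') :
    ∑ j, w j * (normAssocLegendre n m (t j) * normAssocLegendre n' m (t j)) =
      if n = n' then (2 * π)⁻¹ else 0 := by
  rw [sum_mul_eq_integral_of_eqOn_eval hq (by norm_num) ht
    ((natDegree_C_mul_le _ _).trans ((natDegree_assocLegendreProdPoly_le hn hn').trans hD))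
    (normAssocLegendre_mul_eqOn hn hn')]
  exact integral_normAssocLegendre_mul hn hn'

theorem sphHarm_eq_normAssocLegendre (n : ℕ) (m : ℤ) (θ φ : ℝ) :
    sphHarm n m θ φ = (normAssocLegendre n m (cos θ) : ℂ) * Complex.exp (Complex.I * m * φ) :=
  rfl

theorem sphHarm_mul_conj_sphHarm (n n' : ℕ) (m m' : ℤ) (θ φ : ℝ) :
    sphHarm n m θ φ * (starRingEnd ℂ) (sphHarm n' m' θ φ) =
      ((normAssocLegendre n m (cos θ) * normAssocLegendre n' m' (cos θ) : ℝ) : ℂ) *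
        Complex.exp (Complex.I * (m - m' : ℤ) * φ) := by
  have hexp : Complex.exp (Complex.I * m * φ) *
      (starRingEnd ℂ) (Complex.exp (Complex.I * m' * φ)) =
        Complex.exp (Complex.I * (m - m' : ℤ) * φ) := by
    rw [← Complex.exp_conj, ← Complex.exp_add]
    simp only [map_mul, Complex.conj_I, map_intCast, Complex.conj_ofReal]
    push_cast
    ring_nf
  rw [sphHarm_eq_normAssocLegendre, sphHarm_eq_normAssocLegendre, map_mul, Complex.conj_ofReal,
    Complex.ofReal_mul, ← hexp]
  ring

theorem discrete_orthogonality_general (p : ℕ) (t : Fin (p + 1) → ℝ) (w : Fin (p + 1) → ℝ)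
    (ht_mem : ∀ j, t j ∈ Set.Ioo (-1 : ℝ) 1)
    (hq : ∀ q : Polynomial ℝ, q.natDegree ≤ 2 * p + 1 →
      ∑ j, w j * q.eval (t j) = ∫ x in (-1 : ℝ)..1, q.eval x)
    (n n' : ℕ) (hn : n ≤ p) (hn' : n' ≤ p) (m m' : ℤ)
    (hm1 : -(n : ℤ) ≤ m) (hm2 : m ≤ n) (hm'1 : -(n' : ℤ) ≤ m') (hm'2 : m' ≤ n') :
    ((Real.pi / (p + 1) : ℝ) : ℂ) * ∑ j, ∑ k ∈ Finset.range (2 * p + 2),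
        (w j : ℂ) * sphHarm n m (Real.arccos (t j)) (Real.pi * k / (p + 1))
          * (starRingEnd ℂ) (sphHarm n' m' (Real.arccos (t j)) (Real.pi * k / (p + 1))) =
      if n = n' ∧ m = m' then 1 else 0 := by
  have ht : ∀ j, t j ∈ Set.Icc (-1 : ℝ) 1 := fun j => Set.Ioo_subset_Icc_self (ht_mem j)
  calc _ = ((π / (p + 1) : ℝ) : ℂ) *
        (((∑ j, w j * (normAssocLegendre n m (t j) * normAssocLegendre n' m' (t j)) : ℝ) : ℂ) *
          ∑ k ∈ range (2 * p + 2),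
            Complex.exp (Complex.I * (m - m' : ℤ) * ((π * k / (p + 1) : ℝ) : ℂ))) := by
        rw [Complex.ofReal_sum, sum_mul_sum]
        refine congrArg _ (sum_congr rfl fun j _ => sum_congr rfl fun k _ => ?_)
        rw [mul_assoc, sphHarm_mul_conj_sphHarm, cos_arccos (ht j).1 (ht j).2]
        push_cast
        ring
    _ = _ := by
        rw [sum_range_exp_I_mul_pi_div p (by omega)]
        by_cases hmm : m = m'
        · subst hmm
          rw [if_pos (sub_self m),
            sum_mul_normAssocLegendre_mul hq ht (by omega) (by omega) (by omega)]
          by_cases hnn : n = n'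
          · rw [if_pos hnn, if_pos ⟨hnn, rfl⟩]
            push_cast
            field_simp
          · rw [if_neg hnn, if_neg fun h => hnn h.1, Complex.ofReal_zero, zero_mul, mul_zero]
        · rw [if_neg (sub_ne_zero.mpr hmm), if_neg fun h => hmm h.2, mul_zero, mul_zero]

/-- Discrete orthogonality of the spherical harmonics on the Gaussian spherical grid:
Gauss–Legendre nodes `t_j = cos θ_j` in `θ` and `2p+2` equispaced points in `φ`. -/
theorem discrete_orthogonality (p : ℕ) (t : Fin (p + 1) → ℝ) (w : Fin (p + 1) → ℝ)
    (ht_mem : ∀ j, t j ∈ Set.Ioo (-1 : ℝ) 1) (ht_inj : Function.Injective t)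
    (hq : ∀ q : Polynomial ℝ, q.natDegree ≤ 2 * p + 1 →
      ∑ j, w j * q.eval (t j) = ∫ x in (-1 : ℝ)..1, q.eval x)
    (n n' : ℕ) (hn : n ≤ p) (hn' : n' ≤ p) (m m' : ℤ)
    (hm1 : -(n : ℤ) ≤ m) (hm2 : m ≤ n) (hm'1 : -(n' : ℤ) ≤ m') (hm'2 : m' ≤ n') :
    ((Real.pi / (p + 1) : ℝ) : ℂ) * ∑ j, ∑ k ∈ Finset.range (2 * p + 2),
        (w j : ℂ) * sphHarm n m (Real.arccos (t j)) (Real.pi * k / (p + 1))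
          * (starRingEnd ℂ) (sphHarm n' m' (Real.arccos (t j)) (Real.pi * k / (p + 1))) =
      if n = n' ∧ m = m' then 1 else 0 :=
  discrete_orthogonality_general p t w ht_mem hq n n' hn hn' m m' hm1 hm2 hm'1 hm'2
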